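/- arXiv:2302.02271 — 6 statements merged into one kernel-verified Lean document; each statement's English description precedes it below -/
import Mathlib

section
/- Let P(x) be a monic polynomial with integer coefficients all of whose complex roots have modulus 1. Then every root of P is a root of unity. -/
/-- Kronecker's theorem: a monic integer polynomial all of whose complex roots
have modulus 1 has only roots of unity as roots. -/
theorem kronecker (P : Polynomial ℤ) (hP : P.Monic)
    (h : ∀ z : ℂ, Polynomial.aeval z P = 0 → ‖z‖ = 1) :
    ∀ z : ℂ, Polynomial.aeval z P = 0 → ∃ n : ℕ, 0 < n ∧ z ^ n = 1 := by
  intro z hz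
  have hzint : IsIntegral ℤ z := ⟨P, hP, hz⟩
  let K := IntermediateField.adjoin ℚ ({z} : Set ℂ)
  have hzalg : IsAlgebraic ℚ z := (hzint.tower_top (A := ℚ)).isAlgebraic
  have : FiniteDimensional ℚ K :=
    IntermediateField.adjoin.finiteDimensional hzalg.isIntegral
  have : NumberField K := ⟨⟩
  set x : K := ⟨z, IntermediateField.mem_adjoin_simple_self ℚ z⟩ with hx
  have hinj : Function.Injective (algebraMap K ℂ) := (algebraMap K ℂ).injective
  have hxi : IsIntegral ℤ x := by
    rw [← isIntegral_algebraMap_iff hinj]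
    exact hzint
  have hxroot : Polynomial.aeval x P = 0 := by
    apply hinj
    rw [map_zero, ← Polynomial.aeval_algebraMap_apply]
    exact hz
  have hnorm : ∀ φ : K →+* ℂ, ‖φ x‖ = 1 := by
    intro φ
    have : Polynomial.aeval (φ x) P = 0 := by
      have := Polynomial.aeval_algHom_apply φ.toIntAlgHom x P
      simp only [RingHom.toIntAlgHom_coe] at this ⊢
      rw [this, hxroot, map_zero]
    exact h _ this
  obtain ⟨n, hn, hpow⟩ := NumberField.Embeddings.pow_eq_one_of_norm_eq_one K ℂ hxi hnorm
  refine ⟨n, hn, ?_⟩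
  have := congrArg (algebraMap K ℂ) hpow
  rwa [map_pow, map_one] at this
end

section
/- Let λ be a Salem number and n a positive integer. Then the real number λ^(1/n) has an algebraic conjugate of modulus 1, i.e., the minimal polynomial over ℚ of the real n-th root of λ has a complex root of modulus 1. -/
open Polynomial

set_option maxHeartbeats 1000000
set_option synthInstance.maxHeartbeats 400000

/-- A Salem number: a real algebraic integer `l > 1` all of whose other conjugates have
modulus at most 1, with at least one conjugate of modulus exactly 1. -/
def IsSalem (l : ℝ) : Prop :=
  1 < l ∧ IsIntegral ℤ l ∧
  (∀ z : ℂ, Polynomial.aeval z (minpoly ℚ l) = 0 → z ≠ (l : ℂ) → ‖z‖ ≤ 1) ∧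
  (∃ z : ℂ, Polynomial.aeval z (minpoly ℚ l) = 0 ∧ ‖z‖ = 1)

/-- For a Salem number λ and n ≥ 1, the real n-th root of λ has a conjugate of modulus 1. -/
theorem salem_root_has_conjugate_of_modulus_one (l : ℝ) (h : IsSalem l)
    (n : ℕ) (hn : 0 < n) :
    ∃ z : ℂ, Polynomial.aeval z (minpoly ℚ (l ^ ((n : ℝ)⁻¹))) = 0 ∧ ‖z‖ = 1 := by
  obtain ⟨hl1, hint, _hle, z, hzroot, hzabs⟩ := h
  have hl0 : (0:ℝ) ≤ l := le_of_lt (lt_trans one_pos hl1)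
  set μ : ℝ := l ^ ((n : ℝ)⁻¹) with hμdef
  have hμn : μ ^ n = l := Real.rpow_inv_natCast_pow hl0 hn.ne'
  have hlQ : IsIntegral ℚ l := hint.tower_top
  set P : ℚ[X] := minpoly ℚ l with hP
  -- μ is a root of P.comp (X ^ n)
  have hμcomp : Polynomial.aeval μ (P.comp (X ^ n)) = 0 := by
    rw [Polynomial.aeval_comp]
    simp [hμn, hP, minpoly.aeval ℚ l]
  have hcompne : P.comp ((X : ℚ[X]) ^ n) ≠ 0 := by
    intro hc
    have hd := Polynomial.natDegree_comp (p := P) (q := (X:ℚ[X]) ^ n)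
    rw [hc] at hd
    simp [Polynomial.natDegree_X_pow] at hd
    have h1 := minpoly.natDegree_pos hlQ
    rcases hd with h2 | h3
    · rw [hP] at h2; omega
    · omega
  have hμQ : IsIntegral ℚ μ := IsAlgebraic.isIntegral ⟨P.comp (X ^ n), hcompne, hμcomp⟩
  set Q : ℚ[X] := minpoly ℚ μ with hQ
  have hQdvd : Q ∣ P.comp (X ^ n) := minpoly.dvd ℚ μ hμcomp
  haveI : Fact (Irreducible P) := ⟨minpoly.irreducible hlQ⟩
  haveI : Fact (Irreducible Q) := ⟨minpoly.irreducible hμQ⟩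
  set A := AdjoinRoot Q with hA
  set a : A := AdjoinRoot.root Q with ha
  -- a ^ n is a root of P
  have hPan : Polynomial.aeval (a ^ n) P = 0 := by
    have : Polynomial.aeval a (P.comp (X ^ n)) = 0 := by
      obtain ⟨c, hc⟩ := hQdvd
      rw [hc, map_mul, show (aeval a) Q = 0 from AdjoinRoot.eval₂_root Q, zero_mul]
    rwa [Polynomial.aeval_comp, map_pow, Polynomial.aeval_X] at this
  set K := AdjoinRoot P with hK
  have hzroot' : Polynomial.aeval z P = 0 := hzroot
  let θ : K →ₐ[ℚ] A := AdjoinRoot.liftAlgHom P (Algebra.ofId ℚ A) (a ^ n) hPan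
  let φ : K →ₐ[ℚ] ℂ := AdjoinRoot.liftAlgHom P (Algebra.ofId ℚ ℂ) z hzroot'
  letI : Algebra K A := θ.toRingHom.toAlgebra
  letI : Algebra K ℂ := φ.toRingHom.toAlgebra
  haveI : IsScalarTower ℚ K A := IsScalarTower.of_algebraMap_eq fun r => (θ.commutes r).symm
  haveI : IsScalarTower ℚ K ℂ := IsScalarTower.of_algebraMap_eq fun r => (φ.commutes r).symm
  haveI : FiniteDimensional ℚ A := (AdjoinRoot.powerBasis (minpoly.ne_zero hμQ)).finite
  haveI : Algebra.IsAlgebraic ℚ A := Algebra.IsAlgebraic.of_finite ℚ A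
  haveI : Algebra.IsAlgebraic K A := Algebra.IsAlgebraic.tower_top (K := ℚ) K
  let ψ : A →ₐ[K] ℂ := IsAlgClosed.lift
  set w : ℂ := ψ a with hw
  refine ⟨w, ?_, ?_⟩
  · have h0 : Polynomial.aeval a Q = 0 := by
      exact AdjoinRoot.eval₂_root Q
    have := Polynomial.aeval_algHom_apply (ψ.restrictScalars ℚ) a Q
    rw [h0, map_zero] at this
    exact this
  · have hwn : w ^ n = z := by
      have h1 : a ^ n = algebraMap K A (AdjoinRoot.root P) := by
        show a ^ n = θ (AdjoinRoot.root P)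
        exact (AdjoinRoot.liftAlgHom_root ..).symm
      rw [hw, ← map_pow, h1, ψ.commutes]
      show φ (AdjoinRoot.root P) = z
      exact AdjoinRoot.liftAlgHom_root ..
    have habs : ‖w‖ ^ n = 1 := by
      rw [← norm_pow, hwn, hzabs]
    have h0 : 0 ≤ ‖w‖ := norm_nonneg _
    rcases pow_eq_one_iff_cases.mp habs with h1 | h2 | h3
    · omega
    · exact h2
    · exfalso; nlinarith
end

section
/- Let p > 3 be a prime and 1 ≤ k ≤ (p−1)/2 an integer. Then ζ_p^k + ζ_p^{−k} is not a p-th power in ℚ(ζ_p)×; consequently ℚ(ζ_p, (ζ_p^k + ζ_p^{−k})^{1/p}) is a cyclic Galois extension of ℚ(ζ_p) of degree p. -/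
open IntermediateField

open Polynomial

lemma two_mul_choose_two (n : ℕ) : 2 * n.choose 2 = n * (n - 1) := by
  rw [Nat.choose_two_right, Nat.mul_div_cancel']
  rcases Nat.even_or_odd n with h | h
  · exact Dvd.dvd.mul_right h.two_dvd _
  · cases n with
    | zero => simp
    | succ m => exact Dvd.dvd.mul_left (by simpa using (Nat.Odd.sub_odd h odd_one).two_dvd) _

/-- Frobenius-type congruence: `f(ζ)^p ≡ m (mod p)` for some integer `m`, when `ζ^p = 1`. -/
lemma aeval_pow_prime_mod (p : ℕ) (hp : p.Prime) {ζ : ℂ} (hζp : ζ ^ p = 1) (f : Polynomial ℤ) :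
    ∃ m : ℤ, ∃ g : Polynomial ℤ, (Polynomial.aeval ζ f) ^ p = m + p * Polynomial.aeval ζ g := by
  induction f using Polynomial.induction_on' with
  | monomial n c =>
      refine ⟨c ^ p, 0, ?_⟩
      rw [aeval_monomial, mul_pow, ← pow_mul, mul_comm n p, pow_mul, hζp, one_pow, mul_one]
      simp
  | add f g hf hg =>
      obtain ⟨m1, g1, h1⟩ := hf
      obtain ⟨m2, g2, h2⟩ := hg
      refine ⟨m1 + m2, g1 + g2 + ∑ i ∈ Finset.Ioo 0 p,
        f ^ i * g ^ (p - i) * Polynomial.C ((p.choose i / p : ℕ) : ℤ), ?_⟩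
      rw [map_add, add_pow_prime_eq hp, h1, h2]
      simp only [map_add, map_sum, map_mul, map_pow, aeval_C, algebraMap_int_eq,
        eq_intCast, Int.cast_natCast, map_intCast, map_natCast]
      push_cast
      have key : (p : ℂ) * Polynomial.aeval ζ f * Polynomial.aeval ζ g *
          ∑ x ∈ Finset.Ioo 0 p, Polynomial.aeval ζ f ^ (x - 1) * Polynomial.aeval ζ g ^ (p - x - 1)
            * ((p.choose x / p : ℕ) : ℂ) = p * ∑ x ∈ Finset.Ioo 0 p,
            Polynomial.aeval ζ f ^ x * Polynomial.aeval ζ g ^ (p - x) * ((p.choose x / p : ℕ) : ℂ) := by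
        rw [mul_assoc, mul_assoc]
        congr 1
        rw [Finset.mul_sum, Finset.mul_sum]
        refine Finset.sum_congr rfl fun x hx => ?_
        obtain ⟨h0, hxp⟩ := Finset.mem_Ioo.mp hx
        obtain ⟨a, rfl⟩ : ∃ a, x = a + 1 := ⟨x - 1, by omega⟩
        obtain ⟨b, hb⟩ : ∃ b, p - (a + 1) = b + 1 := ⟨p - (a + 1) - 1, by omega⟩
        rw [hb]
        simp only [Nat.add_sub_cancel]
        ring
      rw [key]
      ring

open IntermediateField in
lemma not_pth_power (p : ℕ) (hp : p.Prime) (hp3 : 3 < p)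
    (k : ℕ) (hk1 : 1 ≤ k) (hk2 : k ≤ (p - 1) / 2)
    (ζ : ℂ) (hζ : IsPrimitiveRoot ζ p) :
    ¬ ∃ b : (ℚ⟮ζ⟯ : IntermediateField ℚ ℂ), (b : ℂ) ^ p = ζ ^ k + ζ⁻¹ ^ k := by
  rintro ⟨b, hb⟩
  haveI : Fact p.Prime := ⟨hp⟩
  have hkp : k < p := by omega
  have hζp : ζ ^ p = 1 := hζ.pow_eq_one
  have hinv : ζ⁻¹ ^ k = ζ ^ (p - k) := by
    have h1 : ζ ^ (p - k) * ζ ^ k = 1 := by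
      rw [← pow_add, Nat.sub_add_cancel hkp.le, hζp]
    rw [inv_pow]
    exact (eq_inv_of_mul_eq_one_left h1).symm
  have hζint : IsIntegral ℤ ζ := hζ.isIntegral hp.pos
  have hαint : IsIntegral ℤ (ζ ^ k + ζ⁻¹ ^ k) := by
    have := (hζint.pow k).add (hζint.pow (p - k))
    rwa [← hinv] at this
  have hbint : IsIntegral ℤ (b : ℂ) := by
    refine IsIntegral.of_pow hp.pos ?_
    rw [hb]; exact hαint
  -- b lies in ℤ[ζ], i.e. b = f(ζ) for an integer polynomial f
  have hbf : ∃ f : Polynomial ℤ, Polynomial.aeval ζ f = (b : ℂ) := by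
    have hζQ : IsIntegral ℚ ζ := hζint.tower_top
    set P : ℕ+ := ⟨p, hp.pos⟩ with hP
    have hζ' : IsPrimitiveRoot ζ ((P : ℕ+) : ℕ) := hζ
    haveI hins1 := hζ'.adjoin_isCyclotomicExtension ℚ
    have hsub : (ℚ⟮ζ⟯ : IntermediateField ℚ ℂ).toSubalgebra = Algebra.adjoin ℚ {ζ} :=
      IntermediateField.adjoin_simple_toSubalgebra_of_isAlgebraic hζQ.isAlgebraic
    letI e : (Algebra.adjoin ℚ ({ζ} : Set ℂ)) ≃ₐ[ℚ] (ℚ⟮ζ⟯ : IntermediateField ℚ ℂ) :=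
      Subalgebra.equivOfEq _ _ hsub.symm
    haveI hins2 : IsCyclotomicExtension {(P : ℕ)} ℚ (ℚ⟮ζ⟯ : IntermediateField ℚ ℂ) :=
      IsCyclotomicExtension.equiv _ ℚ _ e
    set ζK : (ℚ⟮ζ⟯ : IntermediateField ℚ ℂ) := ⟨ζ, mem_adjoin_simple_self ℚ ζ⟩ with hζKdef
    have hζK : IsPrimitiveRoot ζK ((P : ℕ+) : ℕ) :=
      IsPrimitiveRoot.of_map_of_injective (f := algebraMap (ℚ⟮ζ⟯ : IntermediateField ℚ ℂ) ℂ)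
        hζ' (algebraMap (ℚ⟮ζ⟯ : IntermediateField ℚ ℂ) ℂ).injective
    haveI : Fact (Nat.Prime ((P : ℕ+) : ℕ)) := ⟨hp⟩
    haveI hic := IsCyclotomicExtension.Rat.isIntegralClosure_adjoin_singleton_of_prime
      (p := (P : ℕ)) (K := (ℚ⟮ζ⟯ : IntermediateField ℚ ℂ)) hζK
    have hbK : IsIntegral ℤ b :=
      (isIntegral_algebraMap_iff (A := (ℚ⟮ζ⟯ : IntermediateField ℚ ℂ)) (B := ℂ)
        (algebraMap (ℚ⟮ζ⟯ : IntermediateField ℚ ℂ) ℂ).injective).mp hbint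
    obtain ⟨y, hy⟩ := IsIntegralClosure.isIntegral_iff
      (A := Algebra.adjoin ℤ ({ζK} : Set (ℚ⟮ζ⟯ : IntermediateField ℚ ℂ))) |>.mp hbK
    have hymem : (y : (ℚ⟮ζ⟯ : IntermediateField ℚ ℂ)) ∈ Algebra.adjoin ℤ ({ζK} : Set _) := y.2
    have hymem' : (y : (ℚ⟮ζ⟯ : IntermediateField ℚ ℂ)) ∈ (Polynomial.aeval (R := ℤ) ζK).range := by
      rw [← Algebra.adjoin_singleton_eq_range_aeval]; exact hymem
    obtain ⟨f, hfy⟩ := hymem'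
    refine ⟨f, ?_⟩
    have h1 : Polynomial.aeval (algebraMap (ℚ⟮ζ⟯ : IntermediateField ℚ ℂ) ℂ ζK) f
        = algebraMap (ℚ⟮ζ⟯ : IntermediateField ℚ ℂ) ℂ (Polynomial.aeval ζK f) :=
      Polynomial.aeval_algebraMap_apply ℂ ζK f
    have h2 : algebraMap (ℚ⟮ζ⟯ : IntermediateField ℚ ℂ) ℂ ζK = ζ := rfl
    have h3 : (y : (ℚ⟮ζ⟯ : IntermediateField ℚ ℂ)) = b := hy
    rw [h2] at h1
    have h4 : (Polynomial.aeval ζK) f = b := hfy.trans h3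
    rw [h1, h4]
    rfl
  obtain ⟨f, hf⟩ := hbf
  obtain ⟨m, g, hmg⟩ := aeval_pow_prime_mod p hp hζp f
  rw [hf, hb] at hmg
  -- the contradiction polynomial
  set F : Polynomial ℤ := X ^ k + X ^ (p - k) - C m - C (p : ℤ) * g with hFdef
  have hF : Polynomial.aeval ζ F = 0 := by
    simp only [hFdef, map_add, map_sub, map_mul, map_pow, aeval_X, aeval_C,
      algebraMap_int_eq, eq_intCast, map_intCast, map_natCast]
    rw [← hinv]
    linear_combination hmg
  have hdvd : cyclotomic p ℤ ∣ F := by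
    rw [cyclotomic_eq_minpoly hζ hp.pos]
    exact minpoly.isIntegrallyClosed_dvd hζint hF
  have hdvd2 : cyclotomic p (ZMod p) ∣ F.map (Int.castRingHom (ZMod p)) := by
    have := Polynomial.map_dvd (Int.castRingHom (ZMod p)) hdvd
    rwa [map_cyclotomic] at this
  have hcyc : cyclotomic p (ZMod p) = (X - 1) ^ (p - 1) := by
    have h1 : (X - 1 : (ZMod p)[X]) ^ p = X ^ p - 1 := by
      rw [sub_pow_char]; simp
    have h2 := cyclotomic_prime_mul_X_sub_one (ZMod p) p
    have h3 : (X - 1 : (ZMod p)[X]) ≠ 0 := by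
      intro h
      simpa using congrArg Polynomial.natDegree (sub_eq_zero.mp h)
    refine (mul_right_cancel₀ h3 ?_).symm
    rw [h2, ← pow_succ, Nat.sub_add_cancel hp.one_lt.le, h1]
  rw [hcyc] at hdvd2
  have hFbar : F.map (Int.castRingHom (ZMod p)) =
      X ^ k + X ^ (p - k) - C ((m : ZMod p)) := by
    simp [hFdef, Polynomial.map_add, Polynomial.map_sub, Polynomial.map_pow,
      Polynomial.map_mul, ZMod.natCast_self]
  rw [hFbar] at hdvd2
  obtain ⟨q, hq⟩ := hdvd2
  have hcomp : (X : (ZMod p)[X]) ^ (p - 1) ∣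
      (X ^ k + X ^ (p - k) - C ((m : ZMod p))).comp (X + 1) := by
    refine ⟨q.comp (X + 1), ?_⟩
    rw [hq, Polynomial.mul_comp, Polynomial.pow_comp, Polynomial.sub_comp,
      Polynomial.X_comp, Polynomial.one_comp]
    ring_nf
  have hco : ((X ^ k + X ^ (p - k) - C ((m : ZMod p))).comp (X + 1)).coeff 2 = 0 :=
    Polynomial.X_pow_dvd_iff.mp hcomp 2 (by omega)
  have hch : ((k.choose 2 : ZMod p)) + (((p - k).choose 2 : ℕ) : ZMod p) = 0 := by
    simp only [Polynomial.sub_comp, Polynomial.add_comp, Polynomial.pow_comp,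
      Polynomial.X_comp, Polynomial.C_comp, Polynomial.coeff_sub, Polynomial.coeff_add,
      Polynomial.coeff_X_add_one_pow, Polynomial.coeff_C] at hco
    simpa using hco
  -- Conclude: 2 * (that sum) = 2 k² in ZMod p, so k ≡ 0 mod p, contradiction
  have hjk : 1 ≤ p - k := by omega
  have e1 : ((k * (k - 1) + (p - k) * ((p - k) - 1) : ℕ) : ZMod p) = 2 * (k : ZMod p) ^ 2 := by
    push_cast [Nat.cast_sub hk1, Nat.cast_sub hkp.le, Nat.cast_sub hjk, ZMod.natCast_self]
    ring
  have e2 : ((2 * (k.choose 2 + (p - k).choose 2) : ℕ) : ZMod p) = 0 := by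
    push_cast
    rw [hch]
    ring
  rw [Nat.mul_add, two_mul_choose_two, two_mul_choose_two, e1] at e2
  have h2ne : (2 : ZMod p) ≠ 0 := by
    have : ((2 : ℕ) : ZMod p) ≠ 0 := by
      rw [Ne, ZMod.natCast_eq_zero_iff]
      intro h
      exact absurd (Nat.le_of_dvd (by norm_num) h) (by omega)
    simpa using this
  have hkne : (k : ZMod p) ≠ 0 := by
    rw [Ne, ZMod.natCast_eq_zero_iff]
    intro h
    exact absurd (Nat.le_of_dvd (by omega) h) (by omega)
  have hk2zero : (k : ZMod p) ^ 2 = 0 := by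
    rcases mul_eq_zero.mp e2 with h | h
    · exact absurd h h2ne
    · exact h
  exact hkne (pow_eq_zero_iff two_ne_zero |>.mp hk2zero)


/-- For a prime p > 3 and 1 ≤ k ≤ (p−1)/2, the element ζ_p^k + ζ_p^{−k} is not a p-th power
in ℚ(ζ_p), and adjoining a p-th root of it gives a cyclic Galois extension of degree p. -/
theorem adjoin_pth_root_cyclic (p : ℕ) (hp : p.Prime) (hp3 : 3 < p)
    (k : ℕ) (hk1 : 1 ≤ k) (hk2 : k ≤ (p - 1) / 2)
    (ζ : ℂ) (hζ : IsPrimitiveRoot ζ p)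
    (ρ : ℂ) (hρ : ρ ^ p = ζ ^ k + ζ⁻¹ ^ k) :
    (¬ ∃ b : (ℚ⟮ζ⟯ : IntermediateField ℚ ℂ), (b : ℂ) ^ p = ζ ^ k + ζ⁻¹ ^ k) ∧
    IsGalois (ℚ⟮ζ⟯ : IntermediateField ℚ ℂ)
      ((ℚ⟮ζ⟯ : IntermediateField ℚ ℂ)⟮ρ⟯ : IntermediateField (ℚ⟮ζ⟯ : IntermediateField ℚ ℂ) ℂ) ∧
    Module.finrank (ℚ⟮ζ⟯ : IntermediateField ℚ ℂ)
      ((ℚ⟮ζ⟯ : IntermediateField ℚ ℂ)⟮ρ⟯ : IntermediateField (ℚ⟮ζ⟯ : IntermediateField ℚ ℂ) ℂ) = p ∧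
    IsCyclic (((ℚ⟮ζ⟯ : IntermediateField ℚ ℂ)⟮ρ⟯ : IntermediateField (ℚ⟮ζ⟯ : IntermediateField ℚ ℂ) ℂ)
      ≃ₐ[(ℚ⟮ζ⟯ : IntermediateField ℚ ℂ)]
      ((ℚ⟮ζ⟯ : IntermediateField ℚ ℂ)⟮ρ⟯ : IntermediateField (ℚ⟮ζ⟯ : IntermediateField ℚ ℂ) ℂ)) := by
  haveI : Fact p.Prime := ⟨hp⟩
  haveI : NeZero p := ⟨hp.ne_zero⟩
  have h1 := not_pth_power p hp hp3 k hk1 hk2 ζ hζ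
  set K := (ℚ⟮ζ⟯ : IntermediateField ℚ ℂ) with hK
  let ζK : K := ⟨ζ, mem_adjoin_simple_self ℚ ζ⟩
  have hζK : IsPrimitiveRoot ζK p :=
    IsPrimitiveRoot.of_map_of_injective (f := algebraMap K ℂ) hζ (algebraMap K ℂ).injective
  set a : K := ζK ^ k + ζK⁻¹ ^ k with hadef
  have ha : algebraMap K ℂ a = ζ ^ k + ζ⁻¹ ^ k := by
    rw [hadef, map_add, map_pow, map_pow, map_inv₀]
    rfl
  have hirr : Irreducible (X ^ p - C a) := by
    apply X_pow_sub_C_irreducible_of_prime hp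
    intro b hbp
    exact h1 ⟨b, by rw [show ((b : ℂ)) = algebraMap K ℂ b from rfl, ← map_pow, hbp, ha]⟩
  haveI := Fact.mk hirr
  have hprim : (primitiveRoots p K).Nonempty := ⟨ζK, (mem_primitiveRoots hp.pos).mpr hζK⟩
  have hρa : ρ ^ p = algebraMap K ℂ a := by rw [ha, hρ]
  have haev : Polynomial.aeval ρ (X ^ p - C a : Polynomial K) = 0 := by
    simp [hρa]
  have hρint : IsIntegral K ρ :=
    ⟨X ^ p - C a, monic_X_pow_sub_C a hp.ne_zero, by simpa using haev⟩
  have hmin : minpoly K ρ = X ^ p - C a :=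
    (minpoly.eq_of_irreducible_of_monic hirr haev (monic_X_pow_sub_C a hp.ne_zero)).symm
  haveI hfd : FiniteDimensional K K⟮ρ⟯ := IntermediateField.adjoin.finiteDimensional hρint
  have hfin : Module.finrank K K⟮ρ⟯ = p := by
    rw [IntermediateField.adjoin.finrank hρint, hmin, natDegree_X_pow_sub_C]
  have hgen : (AdjoinSimple.gen K ρ) ^ p = algebraMap K K⟮ρ⟯ a := by
    apply (algebraMap (K⟮ρ⟯ : IntermediateField K ℂ) ℂ).injective
    rw [map_pow, AdjoinSimple.algebraMap_gen, ← IsScalarTower.algebraMap_apply, hρa]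
  have hgentop : K⟮AdjoinSimple.gen K ρ⟯ = ⊤ := by
    rw [Field.primitive_element_iff_minpoly_natDegree_eq, IntermediateField.minpoly_gen,
      hmin, natDegree_X_pow_sub_C, hfin]
  haveI hsf : IsSplittingField K K⟮ρ⟯ (X ^ p - C a) := by
    have h5 := isSplittingField_X_pow_sub_C_of_root_adjoin_eq_top
      (by rw [hfin]; exact hprim) (by rw [hfin]; exact hgen) hgentop
    rwa [hfin] at h5
  exact ⟨h1, isGalois_of_isSplittingField_X_pow_sub_C hprim hirr _, hfin,
    isCyclic_of_isSplittingField_X_pow_sub_C hprim hirr _⟩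
end

section
/- Let p be a prime and a a positive integer such that the real p-th root of a is not an integer. Then x^p − a is irreducible over ℚ(ζ_p), and ℚ(ζ_p, a^{1/p}) is a cyclic Galois extension of ℚ(ζ_p) of degree p. -/
open IntermediateField

open Polynomial in
lemma aux_rat_no_pth_root (p : ℕ) (hp : p.Prime) (a : ℕ)
    (hnotint : ∀ b : ℤ, (b : ℝ) ≠ (a : ℝ) ^ ((p : ℝ)⁻¹)) :
    ∀ b : ℚ, b ^ p ≠ (a : ℚ) := by
  intro b hb
  have hint : IsIntegral ℤ b := by
    refine ⟨Polynomial.X ^ p - Polynomial.C (a : ℤ), Polynomial.monic_X_pow_sub_C _ hp.ne_zero, ?_⟩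
    simp [hb]
  obtain ⟨z, hz⟩ := IsIntegrallyClosed.isIntegral_iff.mp hint
  have hz' : (z : ℚ) ^ p = (a : ℚ) := by rw [← hb, ← hz]; norm_num
  have hzz : z ^ p = (a : ℤ) := by exact_mod_cast hz'
  have habs : (|z| : ℤ) ^ p = (a : ℤ) := by
    rw [← abs_pow, hzz]; exact abs_of_nonneg (Int.natCast_nonneg a)
  have hr : ((|z| : ℤ) : ℝ) ^ p = (a : ℝ) := by exact_mod_cast habs
  refine hnotint |z| ?_
  rw [← hr, ← Real.rpow_natCast ((|z| : ℤ) : ℝ) p, ← Real.rpow_mul (by positivity),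
    mul_inv_cancel₀ (by exact_mod_cast hp.ne_zero), Real.rpow_one]

open Polynomial in
lemma aux_cyclo_no_pth_root (p : ℕ) (hp : p.Prime) (a : ℕ)
    (hnotint : ∀ b : ℤ, (b : ℝ) ≠ (a : ℝ) ^ ((p : ℝ)⁻¹))
    (ζ : ℂ) (hζ : IsPrimitiveRoot ζ p) :
    ∀ b : (ℚ⟮ζ⟯ : IntermediateField ℚ ℂ), b ^ p ≠ (a : (ℚ⟮ζ⟯ : IntermediateField ℚ ℂ)) := by
  intro b hb
  have Hq : Irreducible (X ^ p - C (a : ℚ)) :=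
    X_pow_sub_C_irreducible_of_prime hp (aux_rat_no_pth_root p hp a hnotint)
  have hbC : (b : ℂ) ^ p = (a : ℂ) := by exact_mod_cast congrArg (algebraMap _ ℂ) hb
  have haev : aeval (b : ℂ) (X ^ p - C (a : ℚ)) = 0 := by
    simp [hbC]
  have hmin : minpoly ℚ (b : ℂ) = X ^ p - C (a : ℚ) :=
    (minpoly.eq_of_irreducible_of_monic Hq haev
      (Polynomial.monic_X_pow_sub_C _ hp.ne_zero)).symm
  have hi : IsIntegral ℚ (b : ℂ) :=
    ⟨X ^ p - C (a : ℚ), Polynomial.monic_X_pow_sub_C _ hp.ne_zero, by simpa using haev⟩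
  have hfr : Module.finrank ℚ (ℚ⟮(b : ℂ)⟯ : IntermediateField ℚ ℂ) = p := by
    rw [IntermediateField.adjoin.finrank hi, hmin, Polynomial.natDegree_X_pow_sub_C]
  have hle : (ℚ⟮(b : ℂ)⟯ : IntermediateField ℚ ℂ) ≤ ℚ⟮ζ⟯ := by
    rw [adjoin_simple_le_iff]; exact b.2
  have hdvd : p ∣ Module.finrank ℚ (ℚ⟮ζ⟯ : IntermediateField ℚ ℂ) :=
    hfr ▸ ⟨_, (IntermediateField.finrank_bot_mul_relfinrank hle).symm⟩
  have hζfr : Module.finrank ℚ (ℚ⟮ζ⟯ : IntermediateField ℚ ℂ) = p - 1 := by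
    have hζi : IsIntegral ℚ ζ :=
      ⟨X ^ p - 1, by simpa using Polynomial.monic_X_pow_sub_C (1 : ℚ) hp.ne_zero,
        by simp [hζ.pow_eq_one]⟩
    rw [IntermediateField.adjoin.finrank hζi, ← Polynomial.cyclotomic_eq_minpoly_rat hζ hp.pos,
      Polynomial.natDegree_cyclotomic, Nat.totient_prime hp]
  have h2 := hp.two_le
  rw [hζfr] at hdvd
  have := Nat.le_of_dvd (by omega) hdvd
  omega

open Polynomial in
/-- For a prime p and a positive integer a whose real p-th root is not an integer, x^p − a is
irreducible over ℚ(ζ_p), and ℚ(ζ_p, a^{1/p}) is a cyclic Galois extension of ℚ(ζ_p) of degree p. -/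
theorem adjoin_pth_root_of_nat_cyclic (p : ℕ) (hp : p.Prime)
    (a : ℕ) (ha : 0 < a) (hnotint : ∀ b : ℤ, (b : ℝ) ≠ (a : ℝ) ^ ((p : ℝ)⁻¹))
    (ζ : ℂ) (hζ : IsPrimitiveRoot ζ p)
    (ρ : ℂ) (hρ : ρ ^ p = (a : ℂ)) :
    Irreducible (Polynomial.X ^ p
      - Polynomial.C ((a : (ℚ⟮ζ⟯ : IntermediateField ℚ ℂ)))) ∧
    IsGalois (ℚ⟮ζ⟯ : IntermediateField ℚ ℂ)
      ((ℚ⟮ζ⟯ : IntermediateField ℚ ℂ)⟮ρ⟯ : IntermediateField (ℚ⟮ζ⟯ : IntermediateField ℚ ℂ) ℂ) ∧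
    Module.finrank (ℚ⟮ζ⟯ : IntermediateField ℚ ℂ)
      ((ℚ⟮ζ⟯ : IntermediateField ℚ ℂ)⟮ρ⟯ : IntermediateField (ℚ⟮ζ⟯ : IntermediateField ℚ ℂ) ℂ) = p ∧
    IsCyclic (((ℚ⟮ζ⟯ : IntermediateField ℚ ℂ)⟮ρ⟯ : IntermediateField (ℚ⟮ζ⟯ : IntermediateField ℚ ℂ) ℂ)
      ≃ₐ[(ℚ⟮ζ⟯ : IntermediateField ℚ ℂ)]
      ((ℚ⟮ζ⟯ : IntermediateField ℚ ℂ)⟮ρ⟯ : IntermediateField (ℚ⟮ζ⟯ : IntermediateField ℚ ℂ) ℂ)) := by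
  set K : IntermediateField ℚ ℂ := ℚ⟮ζ⟯ with hK
  have H : Irreducible (X ^ p - C ((a : K))) :=
    X_pow_sub_C_irreducible_of_prime hp (aux_cyclo_no_pth_root p hp a hnotint ζ hζ)
  have : NeZero p := ⟨hp.ne_zero⟩
  have hζK : ζ ∈ K := mem_adjoin_simple_self ℚ ζ
  have hζ' : IsPrimitiveRoot (⟨ζ, hζK⟩ : K) p :=
    hζ.of_map_of_injective (f := algebraMap K ℂ) (algebraMap K ℂ).injective
  have hprim : (primitiveRoots p K).Nonempty :=
    ⟨⟨ζ, hζK⟩, (mem_primitiveRoots hp.pos).mpr hζ'⟩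
  have hρ' : ρ ^ p = algebraMap K ℂ ((a : K)) := by
    rw [hρ]; simp
  haveI : NoZeroSMulDivisors K ℂ :=
    inferInstance
  have hane : (X ^ p - C ((a : K))) ≠ 0 := X_pow_sub_C_ne_zero hp.pos _
  have hEq : K⟮ρ⟯ = adjoin K ((X ^ p - C ((a : K))).rootSet ℂ) := by
    apply le_antisymm
    · rw [adjoin_simple_le_iff]
      apply subset_adjoin
      rw [mem_rootSet]
      exact ⟨hane, by simp [hρ]⟩
    · rw [adjoin_le_iff]
      intro x hx
      rw [mem_rootSet] at hx
      have hxp : x ^ p = (a : ℂ) := by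
        have := hx.2
        simpa [sub_eq_zero] using this
      have hρne : ρ ≠ 0 := by
        intro h
        rw [h, zero_pow hp.ne_zero] at hρ
        exact_mod_cast (ha.ne' (by exact_mod_cast hρ.symm))
      have hdiv : (x / ρ) ^ p = 1 := by
        rw [div_pow, hxp, hρ]
        exact div_self (Nat.cast_ne_zero.mpr ha.ne')
      obtain ⟨i, -, hi⟩ := hζ.eq_pow_of_pow_eq_one hdiv
      have : x = ζ ^ i * ρ := by
        rw [hi]; field_simp
      rw [this]
      have hζmem : ζ ∈ K⟮ρ⟯ := by
        have := K⟮ρ⟯.algebraMap_mem ⟨ζ, hζK⟩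
        simpa using this
      exact mul_mem (pow_mem hζmem i) (mem_adjoin_simple_self K ρ)
  have hsf : IsSplittingField K (K⟮ρ⟯) (X ^ p - C ((a : K))) := by
    rw [hEq]
    exact adjoin_rootSet_isSplittingField (IsAlgClosed.splits _)
  exact ⟨H, isGalois_of_isSplittingField_X_pow_sub_C hprim H K⟮ρ⟯,
    finrank_of_isSplittingField_X_pow_sub_C hprim H K⟮ρ⟯,
    isCyclic_of_isSplittingField_X_pow_sub_C hprim H K⟮ρ⟯⟩
end

section
/- Let P(x) ∈ ℤ[x] be an irreducible monic polynomial of degree n ≥ 2 all of whose roots are real and of absolute value strictly less than 2. Then the polynomial xⁿ·P(x + 1/x) equals the N-th cyclotomic polynomial Φ_N(x) for some positive integer N, and every root of P is of the form 2·cos(2mπ/N) with m coprime to N. -/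
open Polynomial Real
open IntermediateField

noncomputable def auxQ (P : Polynomial ℤ) (n : ℕ) : Polynomial ℤ :=
  ∑ k ∈ Finset.range (n+1), C (P.coeff k) * X^(n-k) * (X^2+1)^k

lemma auxQ_eval (P : Polynomial ℤ) (n : ℕ) (hn : n = P.natDegree) (z : ℂ) (hz : z ≠ 0) :
    Polynomial.aeval z (auxQ P n) = z ^ n * Polynomial.aeval (z + z⁻¹) P := by
  rw [Polynomial.aeval_eq_sum_range (p := P), ← hn]
  rw [auxQ, map_sum, Finset.mul_sum]
  refine Finset.sum_congr rfl fun k hk => ?_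
  have hkn : k ≤ n := Nat.lt_succ_iff.mp (Finset.mem_range.mp hk)
  simp only [map_mul, map_pow, aeval_X, aeval_C, map_add, map_one, zsmul_eq_mul]
  have h1 : z ^ n = z ^ (n - k) * z ^ k := by rw [← pow_add, Nat.sub_add_cancel hkn]
  have h2 : (z * (z + z⁻¹)) = z^2 + 1 := by field_simp
  calc (algebraMap ℤ ℂ) (P.coeff k) * z ^ (n - k) * (z ^ 2 + 1) ^ k
      = (P.coeff k : ℂ) * (z ^ (n-k) * (z * (z + z⁻¹))^k) := by rw [h2]; simp only [eq_intCast]; ring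
    _ = z ^ n * ((P.coeff k : ℂ) * (z + z⁻¹) ^ k) := by rw [h1, mul_pow]; ring

lemma auxQ_spec (P : Polynomial ℤ) (hm : P.Monic) (n : ℕ) (hn : n = P.natDegree) :
    (auxQ P n).Monic ∧ (auxQ P n).degree = (2*n : ℕ) := by
  have hg2 : ((X^2+1 : Polynomial ℤ)).Monic := by
    simpa using monic_X_pow_add (p := (1 : Polynomial ℤ)) (n := 2) (by simpa using degree_one_le.trans (by norm_num))
  have hg : ((X^2+1 : Polynomial ℤ)^n).Monic := hg2.pow n
  have hd2 : ((X^2+1 : Polynomial ℤ)).degree = 2 := by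
    rw [show (X^2+1 : Polynomial ℤ) = X^2 + C 1 by simp]
    exact degree_X_pow_add_C (by norm_num) 1
  have hgd : ((X^2+1 : Polynomial ℤ)^n).degree = ((2*n : ℕ) : WithBot ℕ) := by
    rw [degree_pow, hd2]; push_cast; ring
  set S : Polynomial ℤ := ∑ k ∈ Finset.range n, C (P.coeff k) * X^(n-k) * (X^2+1)^k with hSdef
  have hQ : auxQ P n = S + (X^2+1)^n := by
    rw [auxQ, Finset.sum_range_succ]
    have hc : P.coeff n = 1 := by rw [hn]; exact hm.coeff_natDegree
    congr 1
    rw [hc]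
    simp
  have hS : S.degree < ((2*n : ℕ) : WithBot ℕ) := by
    refine lt_of_le_of_lt (degree_sum_le _ _) ?_
    rw [Finset.sup_lt_iff (by exact WithBot.bot_lt_coe _)]
    intro k hk
    have hk' : k < n := Finset.mem_range.mp hk
    calc (C (P.coeff k) * X^(n-k) * ((X^2+1 : Polynomial ℤ))^k).degree
        ≤ (C (P.coeff k) * X^(n-k)).degree + (((X^2+1 : Polynomial ℤ))^k).degree := degree_mul_le _ _
      _ ≤ ((C (P.coeff k)).degree + (X^(n-k)).degree) + (((X^2+1 : Polynomial ℤ))^k).degree := by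
          exact add_le_add (degree_mul_le _ _) le_rfl
      _ ≤ ((0 : WithBot ℕ) + ((n-k : ℕ) : WithBot ℕ)) + ((2*k : ℕ) : WithBot ℕ) := by
          refine add_le_add (add_le_add degree_C_le ?_) ?_
          · exact degree_X_pow_le _
          · rw [degree_pow, hd2]
            exact le_of_eq (by push_cast [nsmul_eq_mul]; ring)
      _ = (((n-k) + 2*k : ℕ) : WithBot ℕ) := by push_cast; ring
      _ < ((2*n : ℕ) : WithBot ℕ) := by
          rw [Nat.cast_lt]; omega
  have hSg : S.degree < ((X^2+1 : Polynomial ℤ)^n).degree := by rw [hgd]; exact hS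
  constructor
  · rw [hQ]; exact hg.add_of_right hSg
  · rw [hQ, degree_add_eq_right_of_degree_lt hSg, hgd]

lemma auxQ_at_zero (P : Polynomial ℤ) (hm : P.Monic) (n : ℕ) (hn : n = P.natDegree) :
    Polynomial.aeval (0:ℂ) (auxQ P n) = 1 := by
  rw [auxQ, map_sum]
  rw [Finset.sum_eq_single n]
  · have hc : P.coeff n = 1 := by rw [hn]; exact hm.coeff_natDegree
    simp [hc]
  · intro k hk hkn
    have : 0 < n - k := by
      have := Finset.mem_range.mp hk; omega
    simp [map_mul, map_pow, zero_pow this.ne']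
  · intro h; exact absurd (Finset.self_mem_range_succ n) h


lemma aux_construct (r : ℝ) (hr : |r| < 2) :
    ∃ w : ℂ, w + w⁻¹ = (r:ℂ) ∧ w ≠ 0 ∧ 0 < w.im := by
  have h4 : 0 < 4 - r^2 := by
    have := abs_lt.mp hr; nlinarith
  set s : ℝ := Real.sqrt (4 - r^2) with hsdef
  have hs : s^2 = 4 - r^2 := Real.sq_sqrt h4.le
  have hspos : 0 < s := Real.sqrt_pos.mpr h4
  set w : ℂ := ((r:ℂ) + Complex.I * (s:ℂ))/2 with hwdef
  have him : w.im = s / 2 := by simp [hwdef]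
  have hw0 : w ≠ 0 := by
    intro h; rw [h] at him; simp at him; linarith
  have hs' : ((s:ℝ):ℂ)^2 = 4 - (r:ℂ)^2 := by
    rw [show ((s:ℝ):ℂ)^2 = ((s^2 : ℝ) : ℂ) by push_cast; ring, hs]; push_cast; ring
  have key : w^2 - (r:ℂ)*w + 1 = 0 := by
    rw [hwdef]
    linear_combination ((s:ℂ)^2/4) * Complex.I_sq - 1/4 * hs'
  have hinv : w⁻¹ = (r:ℂ) - w := by
    have : w * ((r:ℂ) - w) = 1 := by linear_combination -key
    exact inv_eq_of_mul_eq_one_right this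
  refine ⟨w, ?_, hw0, by rw [him]; positivity⟩
  rw [hinv]; ring

lemma aux_real_no (x : ℝ) (hx : x ≠ 0) (h : |x + x⁻¹| < 2) : False := by
  have hinv : x * x⁻¹ = 1 := mul_inv_cancel₀ hx
  have h1 := abs_lt.mp h
  rcases lt_or_gt_of_ne hx with hneg | hpos
  · nlinarith [sq_nonneg (x + 1), h1.1, mul_lt_mul_of_neg_left h1.1 hneg]
  · nlinarith [sq_nonneg (x - 1), h1.2, mul_lt_mul_of_pos_left h1.2 hpos]

lemma aux_norm (w : ℂ) (r : ℝ) (hw0 : w ≠ 0) (hr : |r| < 2) (h : w + w⁻¹ = (r:ℂ)) :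
    w * (starRingEnd ℂ) w = 1 := by
  have h1 : w * ((r:ℂ) - w) = 1 := by
    rw [show (r:ℂ) - w = w⁻¹ by rw [← h]; ring]
    exact mul_inv_cancel₀ hw0
  set c : ℂ := (starRingEnd ℂ) w with hcdef
  have h2 : c * ((r:ℂ) - c) = 1 := by
    have := congrArg (starRingEnd ℂ) h1
    simpa [map_mul, map_sub, Complex.conj_ofReal] using this
  by_cases hcw : c = w
  · exfalso
    have him : w.im = 0 := by
      rw [← Complex.conj_eq_iff_im]; exact hcw
    have hwre : w = (w.re : ℂ) := (Complex.conj_eq_iff_re.mp hcw).symm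
    set x := w.re with hxdef
    have hx0 : x ≠ 0 := by
      intro h0; apply hw0; rw [hwre, h0]; simp
    have hxr : (x:ℂ) + (x:ℂ)⁻¹ = (r:ℂ) := by rw [← hwre]; exact h
    have hxr' : x + x⁻¹ = r := by
      have : ((x + x⁻¹ : ℝ) : ℂ) = ((r:ℝ):ℂ) := by push_cast; exact hxr
      exact_mod_cast this
    exact aux_real_no x hx0 (by rw [hxr']; exact hr)
  · have h3 : (c - w) * ((r:ℂ) - c - w) = 0 := by linear_combination h2 - h1
    rcases mul_eq_zero.mp h3 with h4 | h4
    · exact absurd (sub_eq_zero.mp h4) hcw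
    · have hc : c = (r:ℂ) - w := by linear_combination -h4
      show w * c = 1
      rw [hc]; linear_combination h1

lemma aux_root_norm (P : Polynomial ℤ) (hm : P.Monic) (n : ℕ) (hn : n = P.natDegree)
    (hreal : ∀ z : ℂ, Polynomial.aeval z P = 0 → ∃ r : ℝ, z = (r : ℂ) ∧ |r| < 2)
    (w : ℂ) (hw : Polynomial.aeval w (auxQ P n) = 0) : ‖w‖ = 1 := by
  have hw0 : w ≠ 0 := by
    intro h; rw [h, auxQ_at_zero P hm n hn] at hw; exact one_ne_zero hw
  rw [auxQ_eval P n hn w hw0] at hw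
  have hP : Polynomial.aeval (w + w⁻¹) P = 0 :=
    (mul_eq_zero.mp hw).resolve_left (pow_ne_zero n hw0)
  obtain ⟨r, hr1, hr2⟩ := hreal _ hP
  have := aux_norm w r hw0 hr2 hr1
  rw [Complex.mul_conj] at this
  have h2 : Complex.normSq w = 1 := by exact_mod_cast this
  have h3 : ‖w‖^2 = 1 := by rw [Complex.sq_norm]; exact h2
  nlinarith [norm_nonneg w]

set_option maxHeartbeats 2000000 in
set_option synthInstance.maxHeartbeats 400000 in
/-- An irreducible monic integer polynomial of degree n ≥ 2 with all roots real of absolute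
value < 2 satisfies xⁿ·P(x+1/x) = Φ_N(x) for some N, and its roots are 2cos(2mπ/N) with
m coprime to N. -/
theorem small_totally_real_is_cos (P : Polynomial ℤ) (hmonic : P.Monic)
    (hirr : Irreducible P) (n : ℕ) (hn : n = P.natDegree) (hn2 : 2 ≤ n)
    (hreal : ∀ z : ℂ, Polynomial.aeval z P = 0 → ∃ r : ℝ, z = (r : ℂ) ∧ |r| < 2) :
    ∃ N : ℕ, 0 < N ∧
      (∀ z : ℂ, z ≠ 0 →
        z ^ n * Polynomial.aeval (z + z⁻¹) P = Polynomial.eval z (Polynomial.cyclotomic N ℂ)) ∧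
      (∀ z : ℂ, Polynomial.aeval z P = 0 →
        ∃ m : ℕ, Nat.Coprime m N ∧ z = ((2 * Real.cos (2 * m * π / N) : ℝ) : ℂ)) := by
  obtain ⟨hQmonic, hQdeg⟩ := auxQ_spec P hmonic n hn
  have hQnatdeg : (auxQ P n).natDegree = 2*n := natDegree_eq_of_degree_eq_some hQdeg
  -- a root of P
  have hPdegpos : 0 < (P.map (algebraMap ℤ ℂ)).degree := by
    rw [hmonic.degree_map (algebraMap ℤ ℂ)]
    rw [degree_eq_natDegree hmonic.ne_zero, ← hn]
    exact_mod_cast by omega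
  obtain ⟨z₀', hz₀'⟩ := Complex.exists_root hPdegpos
  have hz₀'' : Polynomial.aeval z₀' P = 0 := by
    rwa [IsRoot.def, eval_map, ← aeval_def] at hz₀'
  obtain ⟨r₀, hr₀eq, hr₀lt⟩ := hreal z₀' hz₀''
  have hr₀root : Polynomial.aeval ((r₀:ℝ):ℂ) P = 0 := by rw [← hr₀eq]; exact hz₀''
  obtain ⟨w₀, hw₀sum, hw₀0, hw₀im⟩ := aux_construct r₀ hr₀lt
  have hQw₀ : Polynomial.aeval w₀ (auxQ P n) = 0 := by
    rw [auxQ_eval P n hn w₀ hw₀0, hw₀sum, hr₀root, mul_zero]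
  -- w₀ is an algebraic integer, Kronecker
  have hint : IsIntegral ℤ w₀ := ⟨auxQ P n, hQmonic, hQw₀⟩
  have hintQ : IsIntegral ℚ w₀ := hint.tower_top
  set L : IntermediateField ℚ ℂ := ℚ⟮w₀⟯ with hLdef
  haveI : FiniteDimensional ℚ L := IntermediateField.adjoin.finiteDimensional hintQ
  haveI : NumberField L := ⟨⟩
  set x : L := IntermediateField.AdjoinSimple.gen ℚ w₀ with hxdef
  have hxmap : algebraMap L ℂ x = w₀ := IntermediateField.AdjoinSimple.algebraMap_gen ℚ w₀
  have hxint : IsIntegral ℤ x := by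
    rw [← isIntegral_algebraMap_iff (algebraMap L ℂ).injective, hxmap]; exact hint
  have hminpolyx : minpoly ℚ x = minpoly ℚ w₀ := by
    rw [← hxmap]; exact (minpoly.algebraMap_eq (algebraMap L ℂ).injective x).symm
  have hmindvd : minpoly ℚ w₀ ∣ (auxQ P n).map (algebraMap ℤ ℚ) := by
    apply minpoly.dvd
    rwa [aeval_map_algebraMap]
  have hnorm : ∀ φ : L →+* ℂ, ‖φ x‖ = 1 := by
    intro φ
    have hroot : Polynomial.aeval (φ x) (minpoly ℚ x) = 0 := by
      rw [show φ x = φ.toRatAlgHom x from rfl, Polynomial.aeval_algHom_apply,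
        minpoly.aeval, map_zero]
    apply aux_root_norm P hmonic n hn hreal
    rw [hminpolyx] at hroot
    obtain ⟨c, hc⟩ := hmindvd
    have : Polynomial.aeval (φ x) ((auxQ P n).map (algebraMap ℤ ℚ)) = 0 := by
      rw [hc, map_mul, hroot, zero_mul]
    rwa [aeval_map_algebraMap] at this
  obtain ⟨k, hk, hxk⟩ := NumberField.Embeddings.pow_eq_one_of_norm_eq_one L ℂ hxint hnorm
  have hw₀k : w₀ ^ k = 1 := by
    have := congrArg (algebraMap L ℂ) hxk
    rwa [map_pow, hxmap, map_one] at this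
  have hfin : IsOfFinOrder w₀ := isOfFinOrder_iff_pow_eq_one.mpr ⟨k, hk, hw₀k⟩
  set N : ℕ := orderOf w₀ with hNdef
  have hNpos : 0 < N := hfin.orderOf_pos
  have hprim : IsPrimitiveRoot w₀ N := IsPrimitiveRoot.orderOf w₀
  have hcyc : Polynomial.cyclotomic N ℚ = minpoly ℚ w₀ :=
    Polynomial.cyclotomic_eq_minpoly_rat hprim hNpos
  -- degree count
  have htot : N.totient = 2 * n := by
    have hPQirr : Irreducible (P.map (algebraMap ℤ ℚ)) :=
      (hmonic.irreducible_iff_irreducible_map_fraction_map (K := ℚ)).mp hirr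
    have hPQmonic : (P.map (algebraMap ℤ ℚ)).Monic := hmonic.map _
    have hr₀rootQ : Polynomial.aeval ((r₀:ℝ):ℂ) (P.map (algebraMap ℤ ℚ)) = 0 := by
      rwa [aeval_map_algebraMap]
    have hminr : minpoly ℚ ((r₀:ℝ):ℂ) = P.map (algebraMap ℤ ℚ) :=
      (minpoly.eq_of_irreducible_of_monic hPQirr hr₀rootQ hPQmonic).symm
    have hrint : IsIntegral ℚ ((r₀:ℝ):ℂ) := ⟨P.map (algebraMap ℤ ℚ), hPQmonic, hr₀rootQ⟩
    set K : IntermediateField ℚ ℂ := ℚ⟮((r₀:ℝ):ℂ)⟯ with hKdef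
    haveI hfinK : FiniteDimensional ℚ K := IntermediateField.adjoin.finiteDimensional hrint
    have hKrank : Module.finrank ℚ K = n := by
      rw [hKdef, IntermediateField.adjoin.finrank hrint, hminr,
        hmonic.natDegree_map, ← hn]
    have hLrank : Module.finrank ℚ L = N.totient := by
      rw [hLdef, IntermediateField.adjoin.finrank hintQ, ← hcyc,
        Polynomial.natDegree_cyclotomic]
    have hr₀L : ((r₀:ℝ):ℂ) ∈ L := by
      rw [← hw₀sum]
      exact add_mem (IntermediateField.mem_adjoin_simple_self ℚ w₀)
        (inv_mem (IntermediateField.mem_adjoin_simple_self ℚ w₀))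
    have hKL : K ≤ L := by
      rw [hKdef]; exact IntermediateField.adjoin_simple_le_iff.mpr hr₀L
    have hKreal : ∀ u : ℂ, u ∈ K → u.im = 0 := by
      intro u hu
      have hKRR : K ≤ Subfield.toIntermediateField (K := ℚ) Complex.ofRealHom.fieldRange
          (fun q => ⟨(q:ℝ), by simp⟩) := by
        rw [hKdef]
        exact IntermediateField.adjoin_simple_le_iff.mpr ⟨r₀, rfl⟩
      obtain ⟨t, ht⟩ := hKRR hu
      rw [← ht]; simp [Complex.ofRealHom]
    have hw₀K : w₀ ∉ K := fun h => by have := hKreal w₀ h; linarith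
    have hintK : IsIntegral K w₀ := hintQ.tower_top
    set r₀K : K := ⟨((r₀:ℝ):ℂ), by rw [hKdef]; exact IntermediateField.mem_adjoin_simple_self ℚ _⟩ with hr₀Kdef
    set f : Polynomial K := X^2 - C r₀K * X + 1 with hf
    have hmul : w₀ * w₀⁻¹ = 1 := mul_inv_cancel₀ hw₀0
    have hq : w₀^2 - ((r₀:ℝ):ℂ)*w₀ + 1 = 0 := by
      linear_combination w₀ * hw₀sum - hmul
    have hfw : Polynomial.aeval w₀ f = 0 := by
      rw [hf]
      simp only [map_add, map_sub, map_pow, map_one, map_mul, aeval_X, aeval_C]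
      have hcoe : (algebraMap K ℂ) r₀K = ((r₀:ℝ):ℂ) := rfl
      rw [hcoe]; exact hq
    have hfmonic : f.Monic := by
      rw [hf, show (X^2 - C r₀K * X + 1 : Polynomial K) = X^2 + (C (-r₀K) * X + C 1) by
        rw [C_neg, C_1]; ring]
      exact monic_X_pow_add (lt_of_le_of_lt degree_linear_le (by norm_num))
    have hfdeg : f.natDegree = 2 := by
      apply natDegree_eq_of_degree_eq_some
      rw [hf, show (X^2 - C r₀K * X + 1 : Polynomial K) = X^2 + (C (-r₀K) * X + C 1) by
        rw [C_neg, C_1]; ring]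
      rw [degree_add_eq_left_of_degree_lt, degree_X_pow]
      rw [degree_X_pow]
      exact lt_of_le_of_lt degree_linear_le (by norm_num)
    have hdvdf : minpoly K w₀ ∣ f := minpoly.dvd K w₀ hfw
    have hle2 : (minpoly K w₀).natDegree ≤ 2 :=
      hfdeg ▸ Polynomial.natDegree_le_of_dvd hdvdf hfmonic.ne_zero
    have hge2 : 2 ≤ (minpoly K w₀).natDegree := by
      rw [minpoly.two_le_natDegree_iff hintK]
      rintro ⟨y, hy⟩
      exact hw₀K (hy ▸ y.2)
    have hrankKw : Module.finrank K K⟮w₀⟯ = 2 := by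
      rw [IntermediateField.adjoin.finrank hintK, le_antisymm hle2 hge2]
    have hEeq : K⟮w₀⟯ = IntermediateField.extendScalars hKL := by
      apply le_antisymm
      · exact IntermediateField.adjoin_simple_le_iff.mpr
          (by rw [IntermediateField.mem_extendScalars]
              exact IntermediateField.mem_adjoin_simple_self ℚ w₀)
      · rw [IntermediateField.extendScalars_le_iff]
        exact IntermediateField.adjoin_simple_le_iff.mpr
          (IntermediateField.mem_adjoin_simple_self K w₀)
    have hrestrict : (K⟮w₀⟯).restrictScalars ℚ = L := by
      rw [hEeq]; rfl
    have htower : Module.finrank ℚ K * Module.finrank K K⟮w₀⟯ = Module.finrank ℚ K⟮w₀⟯ :=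
      Module.finrank_mul_finrank ℚ K K⟮w₀⟯
    have hsame : Module.finrank ℚ (K⟮w₀⟯) = Module.finrank ℚ L := by
      rw [← hrestrict]; rfl
    rw [← hLrank, ← hsame, ← htower, hKrank, hrankKw, Nat.mul_comm]
  -- Q = cyclotomic N
  have hQeq : (auxQ P n).map (algebraMap ℤ ℚ) = Polynomial.cyclotomic N ℚ := by
    apply Polynomial.eq_of_monic_of_dvd_of_natDegree_le (Polynomial.cyclotomic.monic N ℚ)
      (hQmonic.map _) (hcyc ▸ hmindvd)
    rw [hQmonic.natDegree_map, hQnatdeg, Polynomial.natDegree_cyclotomic, htot]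
  have hQC : ∀ z : ℂ, Polynomial.aeval z (auxQ P n) = Polynomial.eval z (Polynomial.cyclotomic N ℂ) := by
    intro z
    rw [← Polynomial.map_cyclotomic N (algebraMap ℚ ℂ), ← hQeq, Polynomial.map_map,
      Polynomial.eval_map]
    rfl
  refine ⟨N, hNpos, fun z hz => ?_, fun z hzP => ?_⟩
  · rw [← auxQ_eval P n hn z hz, hQC]
  · obtain ⟨r, hreq, hrlt⟩ := hreal z hzP
    have hrroot : Polynomial.aeval ((r:ℝ):ℂ) P = 0 := by rw [← hreq]; exact hzP
    obtain ⟨w, hwsum, hw0, hwim⟩ := aux_construct r hrlt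
    have hQw : Polynomial.aeval w (auxQ P n) = 0 := by
      rw [auxQ_eval P n hn w hw0, hwsum, hrroot, mul_zero]
    have hwroot : Polynomial.IsRoot (Polynomial.cyclotomic N ℂ) w := by
      rw [Polynomial.IsRoot, ← hQC w]; exact hQw
    haveI : NeZero ((N:ℕ) : ℂ) := ⟨Nat.cast_ne_zero.mpr hNpos.ne'⟩
    have hwprim : IsPrimitiveRoot w N := (Polynomial.isRoot_cyclotomic_iff).mp hwroot
    obtain ⟨i, hiN, hicop, hiexp⟩ := (Complex.isPrimitiveRoot_iff w N hNpos.ne').mp hwprim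
    refine ⟨i, hicop, ?_⟩
    have hθ : 2 * ↑π * Complex.I * ((i:ℂ) / (N:ℂ)) = ((2 * i * π / N : ℝ):ℂ) * Complex.I := by
      push_cast; ring
    rw [hθ] at hiexp
    set θ : ℝ := 2 * i * π / N with hθdef
    have hwinv : w⁻¹ = Complex.exp (-((θ:ℂ) * Complex.I)) := by
      rw [← hiexp, ← Complex.exp_neg]
    have : w + w⁻¹ = ((2 * Real.cos θ : ℝ):ℂ) := by
      rw [← hiexp, ← Complex.exp_neg, ← neg_mul, Complex.exp_mul_I, Complex.exp_mul_I]
      push_cast [Complex.cos_neg, Complex.sin_neg, Complex.ofReal_cos]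
      ring
    rw [hreq, ← this, hwsum]
end

section
/- Let p > 0 be an integer that is not a perfect square. Then the Pell equation Z² − p·X² = 1 has infinitely many solutions (X, Z) in positive integers. -/
/-- The Pell equation Z² − p·X² = 1 has infinitely many positive integer solutions when
p > 0 is not a perfect square. -/
theorem pell_infinitely_many_solutions (p : ℕ) (hp : 0 < p) (h : ¬ IsSquare p) :
    {xz : ℕ × ℕ | 0 < xz.1 ∧ 0 < xz.2 ∧
      (xz.2 : ℤ) ^ 2 - (p : ℤ) * (xz.1 : ℤ) ^ 2 = 1}.Infinite := by
  have hd : ¬ IsSquare (p : ℤ) := by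
    intro ⟨r, hr⟩
    exact h ⟨r.natAbs, by rw [← Int.natAbs_mul, ← hr]; simp⟩
  have hd0 : (0 : ℤ) < p := by exact_mod_cast hp
  obtain ⟨a, ha⟩ := Pell.IsFundamental.exists_of_not_isSquare hd0 hd
  have hax : 0 < a.x := ha.x_pos
  have hay : 0 < a.y := ha.2.1
  set f : ℕ → ℕ × ℕ := fun n => ((a ^ ((n : ℤ) + 1)).y.toNat, (a ^ ((n : ℤ) + 1)).x.toNat)
  have hypos : ∀ n : ℕ, 0 < (a ^ ((n : ℤ) + 1)).y := fun n =>
    Pell.Solution₁.y_zpow_pos hax hay (by positivity)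
  have hxpos : ∀ n : ℕ, 0 < (a ^ ((n : ℤ) + 1)).x := fun n =>
    Pell.Solution₁.x_zpow_pos hax _
  apply Set.infinite_of_injective_forall_mem (f := f)
  case hi =>
    intro m n hmn
    have hm := ha.y_strictMono
    have := congrArg Prod.fst hmn
    simp only [f] at this
    have h2 : (a ^ ((m : ℤ) + 1)).y = (a ^ ((n : ℤ) + 1)).y := by
      have h1 := (hypos m).le
      have h2 := (hypos n).le
      omega
    have := hm.injective h2
    omega
  case hf =>
    intro n
    refine ⟨by have := hypos n; simp [f]; omega, by have := hxpos n; simp [f]; omega, ?_⟩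
    have hprop := (a ^ ((n : ℤ) + 1)).prop
    simp only [f]
    rw [Int.toNat_of_nonneg (hxpos n).le, Int.toNat_of_nonneg (hypos n).le]
    exact hprop
end
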